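/- Let V = span{z(g₁) − z(g₂) : g₁, g₂ ∈ 𝒢_k}. There exists θ̂ ∈ V with L(θ̂) = sup_{θ ∈ ℝⁿ} L(θ) if and only if the target t lies in the relative interior (intrinsic interior) of the convex hull C of z(𝒢_k). -/

import Mathlib

open scoped RealInnerProductSpace BigOperators

/-!
A maximiser of `ℓ` sees no direction of increase: moving `θ` by `u` raises `ℓ` as soon as every
`z g` lies in the half-space `⟪u, ·⟫ ≤ ⟪u, t⟫` and one of them strictly. Hence every hyperplane
through `t` supporting the points `z g` contains all of them, which is exactly `t ∈ ri C`.
Conversely, for `t ∈ ri C` compactness of the unit sphere of `V` gives a margin `δ > 0` with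
`max_g ⟪u, z g - t⟫ ≥ δ ‖u‖` on `V`, so `ℓ θ ≤ -δ ‖θ‖` on `V`; `ℓ` is coercive on `V` and
invariant under translations by `Vᗮ`, hence it attains its supremum at a point of `V`.
-/

open Set Filter

section LogLikelihood

variable {E : Type*} [NormedAddCommGroup E] [InnerProductSpace ℝ E]
variable {ι : Type*} [Fintype ι]

noncomputable def logLik (z : ι → E) (t θ : E) : ℝ :=
  ⟪θ, t⟫ - Real.log (∑ i, Real.exp ⟪θ, z i⟫)

variable (z : ι → E) (t : E)

lemma sum_exp_inner_pos [Nonempty ι] (θ : E) : 0 < ∑ i, Real.exp ⟪θ, z i⟫ :=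
  Finset.sum_pos (fun _ _ => Real.exp_pos _) Finset.univ_nonempty

lemma logLik_le_inner_sub (θ : E) (i : ι) : logLik z t θ ≤ ⟪θ, t - z i⟫ := by
  have hle : Real.exp ⟪θ, z i⟫ ≤ ∑ j, Real.exp ⟪θ, z j⟫ :=
    Finset.single_le_sum (f := fun j => Real.exp ⟪θ, z j⟫) (fun j _ => (Real.exp_pos _).le)
      (Finset.mem_univ i)
  have hlog : ⟪θ, z i⟫ ≤ Real.log (∑ j, Real.exp ⟪θ, z j⟫) := by
    simpa using Real.log_le_log (Real.exp_pos _) hle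
  rw [inner_sub_right]
  unfold logLik
  linarith

lemma continuous_logLik [Nonempty ι] : Continuous (logLik z t) :=
  (continuous_id.inner continuous_const).sub <|
    (continuous_finsetSum _ fun _ _ => (continuous_id.inner continuous_const).rexp).log
      fun θ => (sum_exp_inner_pos z θ).ne'

lemma logLik_lt_add [Nonempty ι] {θ u : E} (hle : ∀ i, ⟪u, z i⟫ ≤ ⟪u, t⟫) {j : ι}
    (hlt : ⟪u, z j⟫ < ⟪u, t⟫) :
    logLik z t θ < logLik z t (θ + u) := by
  have hsum : ∑ i, Real.exp ⟪θ + u, z i⟫ < Real.exp ⟪u, t⟫ * ∑ i, Real.exp ⟪θ, z i⟫ := by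
    simp_rw [Finset.mul_sum, inner_add_left, ← Real.exp_add]
    refine Finset.sum_lt_sum (fun i _ => ?_) ⟨j, Finset.mem_univ _, ?_⟩
    · exact Real.exp_le_exp.2 (by linarith [hle i])
    · exact Real.exp_lt_exp.2 (by linarith)
  have hlog := Real.log_lt_log (sum_exp_inner_pos z _) hsum
  rw [Real.log_mul (Real.exp_ne_zero _) (sum_exp_inner_pos z θ).ne', Real.log_exp] at hlog
  unfold logLik
  rw [inner_add_left]
  linarith

lemma logLik_add_of_inner_eq [Nonempty ι] {θ w : E} (hw : ∀ i, ⟪w, z i⟫ = ⟪w, t⟫) :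
    logLik z t (θ + w) = logLik z t θ := by
  have hsum : ∑ i, Real.exp ⟪θ + w, z i⟫ = Real.exp ⟪w, t⟫ * ∑ i, Real.exp ⟪θ, z i⟫ := by
    simp_rw [Finset.mul_sum, inner_add_left, hw, ← Real.exp_add, add_comm]
  unfold logLik
  rw [inner_add_left, hsum, Real.log_mul (Real.exp_ne_zero _) (sum_exp_inner_pos z θ).ne',
    Real.log_exp]
  ring

end LogLikelihood

section ConvexGeometry

variable {E : Type*} [NormedAddCommGroup E] [InnerProductSpace ℝ E]
variable {ι : Type*}

lemma mem_intrinsicInterior_iff_ball {s : Set E} {x : E} :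
    x ∈ intrinsicInterior ℝ s ↔
      x ∈ affineSpan ℝ s ∧ ∃ ε > 0, ∀ y ∈ affineSpan ℝ s, dist y x < ε → y ∈ s := by
  rw [mem_intrinsicInterior]
  constructor
  · rintro ⟨y, hy, rfl⟩
    rw [mem_interior_iff_mem_nhds, Metric.mem_nhds_iff] at hy
    obtain ⟨ε, hε, hball⟩ := hy
    exact ⟨y.2, ε, hε, fun p hp hd => hball (show (⟨p, hp⟩ : affineSpan ℝ s) ∈ Metric.ball y ε
      by simpa [Metric.mem_ball, Subtype.dist_eq] using hd)⟩
  · rintro ⟨hx, ε, hε, h⟩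
    refine ⟨⟨x, hx⟩, ?_, rfl⟩
    rw [mem_interior_iff_mem_nhds, Metric.mem_nhds_iff]
    exact ⟨ε, hε, fun p hp => h p p.2 (by simpa [Subtype.dist_eq] using hp)⟩

lemma sub_mem_vectorSpan_of_mem_affineSpan {s : Set E} {x y : E} (hx : x ∈ affineSpan ℝ s)
    (hy : y ∈ affineSpan ℝ s) : x - y ∈ vectorSpan ℝ s := by
  simpa [direction_affineSpan] using AffineSubspace.vsub_mem_direction hx hy

lemma mem_orthogonal_vectorSpan_range_iff {z : ι → E} {u : E} :
    u ∈ (vectorSpan ℝ (range z))ᗮ ↔ ∀ i j, ⟪u, z i⟫ = ⟪u, z j⟫ := by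
  constructor
  · intro hu i j
    have := (Submodule.mem_orthogonal' _ u).1 hu _
      (vsub_mem_vectorSpan ℝ (mem_range_self i) (mem_range_self j))
    rwa [vsub_eq_sub, inner_sub_right, sub_eq_zero] at this
  · intro h
    have hker : vectorSpan ℝ (range z) ≤ LinearMap.ker (innerₗ E u) := by
      rw [vectorSpan_def, Submodule.span_le]
      rintro _ ⟨_, ⟨i, rfl⟩, _, ⟨j, rfl⟩, rfl⟩
      simp [innerₗ_apply_apply, inner_sub_right, h i j]
    exact (Submodule.mem_orthogonal' _ u).2 fun v hv => hker hv

def OnlyTrivialSupport (z : ι → E) (t : E) : Prop :=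
  ∀ u : E, (∀ i, ⟪u, z i⟫ ≤ ⟪u, t⟫) → ∀ i, ⟪u, z i⟫ = ⟪u, t⟫

variable {z : ι → E} {t : E}

lemma onlyTrivialSupport_of_mem_intrinsicInterior
    (ht : t ∈ intrinsicInterior ℝ (convexHull ℝ (range z))) : OnlyTrivialSupport z t := by
  rw [mem_intrinsicInterior_iff_ball, affineSpan_convexHull] at ht
  obtain ⟨htA, ε, hε, hball⟩ := ht
  intro u hu j
  refine le_antisymm (hu j) (not_lt.1 fun hj => ?_)
  obtain ⟨s, hs, hsε⟩ := exists_pos_mul_lt hε ‖t - z j‖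
  have hyA : s • (t - z j) + t ∈ affineSpan ℝ (range z) := by
    refine AffineSubspace.vadd_mem_of_mem_direction ?_ htA
    rw [direction_affineSpan]
    exact Submodule.smul_mem _ s
      (sub_mem_vectorSpan_of_mem_affineSpan htA (mem_affineSpan ℝ (mem_range_self j)))
  have hyC := hball _ hyA (by
    rw [dist_eq_norm, add_sub_cancel_right, norm_smul, Real.norm_of_nonneg hs.le]
    linarith)
  have hyu : ⟪u, s • (t - z j) + t⟫ ≤ ⟪u, t⟫ :=
    convexHull_min (range_subset_iff.2 hu) (convex_halfSpace_le (innerₗ E u).isLinear _) hyC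
  rw [inner_add_right, real_inner_smul_right, inner_sub_right] at hyu
  nlinarith

lemma OnlyTrivialSupport.exists_inner_lt (hP : OnlyTrivialSupport z t) {u : E}
    (hu : u ∈ vectorSpan ℝ (range z)) (hu0 : u ≠ 0) : ∃ i, ⟪u, t⟫ < ⟪u, z i⟫ := by
  by_contra! h
  have hperp : u ∈ (vectorSpan ℝ (range z))ᗮ :=
    mem_orthogonal_vectorSpan_range_iff.2 fun i j => by rw [hP u h i, hP u h j]
  exact hu0 (inner_self_eq_zero.1 ((Submodule.mem_orthogonal' _ u).1 hperp u hu))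

lemma OnlyTrivialSupport.mem_affineSpan [Nonempty ι] [FiniteDimensional ℝ E]
    (hP : OnlyTrivialSupport z t) : t ∈ affineSpan ℝ (range z) := by
  obtain ⟨i₀⟩ := ‹Nonempty ι›
  rw [← AffineSubspace.vsub_right_mem_direction_iff_mem
      (_root_.mem_affineSpan ℝ (mem_range_self i₀)),
    direction_affineSpan, ← Submodule.orthogonal_orthogonal (vectorSpan ℝ _),
    Submodule.mem_orthogonal]
  intro w hw
  have hconst := mem_orthogonal_vectorSpan_range_iff.1 hw
  rw [vsub_eq_sub, inner_sub_right, sub_eq_zero]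
  -- apply the hypothesis to whichever of `w`, `-w` supports the points at `t`
  rcases le_total ⟪w, z i₀⟫ ⟪w, t⟫ with h | h
  · exact (hP w (fun i => (hconst i i₀).trans_le h) i₀).symm
  · have := hP (-w) (fun i => by simpa [inner_neg_left, hconst i i₀] using h) i₀
    simpa [inner_neg_left] using this.symm

lemma exists_pos_mul_norm_le_inner [Fintype ι] [Nonempty ι] [FiniteDimensional ℝ E]
    {S : Submodule ℝ E} (a : ι → E) (h : ∀ u ∈ S, u ≠ 0 → ∃ i, 0 < ⟪u, a i⟫) :
    ∃ δ > 0, ∀ u ∈ S, ∃ i, δ * ‖u‖ ≤ ⟪u, a i⟫ := by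
  let g : E → ℝ := fun u => Finset.univ.sup' Finset.univ_nonempty fun i => ⟪u, a i⟫
  have hg : Continuous g :=
    Continuous.finset_sup'_apply _ fun i _ => continuous_id.inner continuous_const
  have hK : IsCompact ((S : Set E) ∩ Metric.sphere 0 1) :=
    (isCompact_sphere 0 1).inter_left S.closed_of_finiteDimensional
  obtain ⟨δ, hδ, hδg⟩ := hK.exists_forall_le' hg.continuousOn (a := 0) fun u ⟨huS, hu1⟩ => by
    obtain ⟨i, hi⟩ := h u huS (ne_zero_of_mem_unit_sphere ⟨u, hu1⟩)
    exact hi.trans_le (Finset.le_sup' (fun i => ⟪u, a i⟫) (Finset.mem_univ i))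
  refine ⟨δ, hδ, fun u hu => ?_⟩
  rcases eq_or_ne u 0 with rfl | hu0
  · simp
  obtain ⟨i, -, hi⟩ := Finset.exists_mem_eq_sup' Finset.univ_nonempty
    fun i => ⟪‖u‖⁻¹ • u, a i⟫
  have hδi := hδg (‖u‖⁻¹ • u) ⟨S.smul_mem _ hu, by simp [norm_smul, hu0]⟩
  refine ⟨i, ?_⟩
  rwa [show g (‖u‖⁻¹ • u) = _ from hi, real_inner_smul_left,
    le_inv_mul_iff₀ (norm_pos_iff.2 hu0), mul_comm] at hδi

lemma OnlyTrivialSupport.exists_margin [Fintype ι] [Nonempty ι] [FiniteDimensional ℝ E]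
    (hP : OnlyTrivialSupport z t) :
    ∃ δ > 0, ∀ u ∈ vectorSpan ℝ (range z), ∃ i, δ * ‖u‖ ≤ ⟪u, z i - t⟫ :=
  exists_pos_mul_norm_le_inner _ fun u hu hu0 => by
    simpa [inner_sub_right] using hP.exists_inner_lt hu hu0

lemma mem_intrinsicInterior_convexHull_of_margin [Finite ι] [FiniteDimensional ℝ E] {δ : ℝ}
    (ht : t ∈ affineSpan ℝ (range z)) (hδ : 0 < δ)
    (hmargin : ∀ u ∈ vectorSpan ℝ (range z), ∃ i, δ * ‖u‖ ≤ ⟪u, z i - t⟫) :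
    t ∈ intrinsicInterior ℝ (convexHull ℝ (range z)) := by
  rw [mem_intrinsicInterior_iff_ball, affineSpan_convexHull]
  refine ⟨ht, δ, hδ, fun y hy hyt => ?_⟩
  -- separate `y` from `C`; projected onto `V`, the normal meets the margin at `t`, so `δ ≤ ‖t - y‖`
  by_contra hyC
  obtain ⟨f, c, hfy, hfC⟩ := geometric_hahn_banach_point_closed (convex_convexHull ℝ _)
    ((finite_range z).isCompact_convexHull ℝ).isClosed hyC
  set V := vectorSpan ℝ (range z)
  set w := (InnerProductSpace.toDual ℝ E).symm f
  set u := V.starProjection w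
  have hproj : ∀ v ∈ V, ⟪u, v⟫ = ⟪w, v⟫ := fun v hv => by
    have := V.starProjection_inner_eq_zero w v hv
    rwa [inner_sub_left, sub_eq_zero, eq_comm] at this
  obtain ⟨i, hi⟩ := hmargin (-u) (V.neg_mem (V.starProjection_apply_mem w))
  have hsep : ⟪u, y - z i⟫ < 0 := by
    rw [hproj _ (sub_mem_vectorSpan_of_mem_affineSpan hy (mem_affineSpan ℝ (mem_range_self i))),
      inner_sub_right, InnerProductSpace.toDual_symm_apply, InnerProductSpace.toDual_symm_apply]
    linarith [hfC _ (subset_convexHull ℝ _ (mem_range_self i))]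
  have hcs : ⟪u, t - y⟫ ≤ ‖u‖ * ‖t - y‖ := real_inner_le_norm _ _
  rw [norm_neg, inner_neg_left, ← neg_sub, inner_neg_right, neg_neg,
    show t - z i = (t - y) + (y - z i) by abel, inner_add_right] at hi
  rw [dist_eq_norm, ← norm_neg, neg_sub] at hyt
  nlinarith [norm_nonneg u]

end ConvexGeometry

section MaximumLikelihood

variable {E : Type*} [NormedAddCommGroup E] [InnerProductSpace ℝ E]
variable {ι : Type*} [Fintype ι] {z : ι → E} {t : E}

lemma onlyTrivialSupport_of_forall_logLik_le [Nonempty ι] {θhat : E}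
    (hmax : ∀ θ, logLik z t θ ≤ logLik z t θhat) : OnlyTrivialSupport z t :=
  fun u hu i => le_antisymm (hu i) <| not_lt.1 fun hi =>
    (hmax (θhat + u)).not_gt (logLik_lt_add z t hu hi)

lemma logLik_starProjection [Nonempty ι] [FiniteDimensional ℝ E]
    (ht : t ∈ affineSpan ℝ (range z)) (θ : E) :
    logLik z t ((vectorSpan ℝ (range z)).starProjection θ) = logLik z t θ := by
  set V := vectorSpan ℝ (range z)
  have hw : ∀ i, ⟪θ - V.starProjection θ, z i⟫ = ⟪θ - V.starProjection θ, t⟫ := fun i => by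
    have := V.starProjection_inner_eq_zero θ _
      (sub_mem_vectorSpan_of_mem_affineSpan (mem_affineSpan ℝ (mem_range_self i)) ht)
    rwa [inner_sub_right, sub_eq_zero] at this
  have := logLik_add_of_inner_eq z t (θ := V.starProjection θ) hw
  rwa [add_sub_cancel, eq_comm] at this

lemma logLik_le_neg_mul_norm {δ : ℝ}
    (hmargin : ∀ u ∈ vectorSpan ℝ (range z), ∃ i, δ * ‖u‖ ≤ ⟪u, z i - t⟫) {θ : E}
    (hθ : θ ∈ vectorSpan ℝ (range z)) : logLik z t θ ≤ -(δ * ‖θ‖) := by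
  obtain ⟨i, hi⟩ := hmargin θ hθ
  have := logLik_le_inner_sub z t θ i
  rw [← neg_sub, inner_neg_right] at this
  linarith

lemma exists_forall_logLik_le_of_margin [Nonempty ι] [FiniteDimensional ℝ E] {δ : ℝ}
    (ht : t ∈ affineSpan ℝ (range z)) (hδ : 0 < δ)
    (hmargin : ∀ u ∈ vectorSpan ℝ (range z), ∃ i, δ * ‖u‖ ≤ ⟪u, z i - t⟫) :
    ∃ θhat ∈ vectorSpan ℝ (range z), ∀ θ, logLik z t θ ≤ logLik z t θhat := by
  set V := vectorSpan ℝ (range z)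
  have hcoercive : ∀ᶠ θ in cocompact E ⊓ 𝓟 V, logLik z t θ ≤ logLik z t 0 := by
    rw [eventually_inf_principal]
    filter_upwards [tendsto_norm_cocompact_atTop.eventually_ge_atTop (-logLik z t 0 / δ)]
      with θ hθ hθV
    have := logLik_le_neg_mul_norm hmargin hθV
    rw [div_le_iff₀ hδ] at hθ
    linarith
  obtain ⟨θhat, hθhat, hmax⟩ := (continuous_logLik z t).continuousOn.exists_isMaxOn'
    V.closed_of_finiteDimensional V.zero_mem hcoercive
  refine ⟨θhat, hθhat, fun θ => ?_⟩
  rw [← logLik_starProjection ht]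
  exact hmax (V.starProjection_apply_mem θ)

theorem exists_forall_logLik_le_mem_vectorSpan_iff [Nonempty ι] [FiniteDimensional ℝ E] :
    (∃ θhat ∈ vectorSpan ℝ (range z), ∀ θ, logLik z t θ ≤ logLik z t θhat) ↔
      t ∈ intrinsicInterior ℝ (convexHull ℝ (range z)) := by
  constructor
  · rintro ⟨θhat, -, hmax⟩
    have hP := onlyTrivialSupport_of_forall_logLik_le hmax
    obtain ⟨δ, hδ, hmargin⟩ := hP.exists_margin
    exact mem_intrinsicInterior_convexHull_of_margin hP.mem_affineSpan hδ hmargin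
  · intro ht
    have hP := onlyTrivialSupport_of_mem_intrinsicInterior ht
    obtain ⟨δ, hδ, hmargin⟩ := hP.exists_margin
    exact exists_forall_logLik_le_of_margin hP.mem_affineSpan hδ hmargin

end MaximumLikelihood

theorem ergm_MLE_in_V_iff_rint_general (k n : ℕ)
    (z : SimpleGraph (Fin k) → EuclideanSpace ℝ (Fin n))
    (t : EuclideanSpace ℝ (Fin n))
    (L : EuclideanSpace ℝ (Fin n) → ℝ)
    (hL : L = fun θ => Real.exp
      (⟪θ, t⟫ - Real.log (∑ g : SimpleGraph (Fin k), Real.exp ⟪θ, z g⟫))) :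
    (∃ θhat ∈ vectorSpan ℝ (Set.range z), ∀ θ, L θ ≤ L θhat) ↔
      t ∈ intrinsicInterior ℝ (convexHull ℝ (Set.range z)) := by
  subst hL
  simp_rw [Real.exp_le_exp]
  exact exists_forall_logLik_le_mem_vectorSpan_iff

/-- With `V = vectorSpan ℝ (z(𝒢_k))`: there exists `θhat ∈ V` at which the likelihood `L`
attains its supremum over all of `ℝⁿ` if and only if `t` lies in the relative interior of
`C = convexHull(z(𝒢_k))`. -/
theorem ergm_MLE_in_V_iff_rint (k n : ℕ) (hk : 0 < k) (hn : 0 < n)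
    (z : SimpleGraph (Fin k) → EuclideanSpace ℝ (Fin n))
    (t : EuclideanSpace ℝ (Fin n))
    (L : EuclideanSpace ℝ (Fin n) → ℝ)
    (hL : L = fun θ => Real.exp
      (⟪θ, t⟫ - Real.log (∑ g : SimpleGraph (Fin k), Real.exp ⟪θ, z g⟫))) :
    (∃ θhat ∈ vectorSpan ℝ (Set.range z), ∀ θ, L θ ≤ L θhat) ↔
      t ∈ intrinsicInterior ℝ (convexHull ℝ (Set.range z)) :=
  ergm_MLE_in_V_iff_rint_general k n z t L hL
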